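/- arXiv:2310.10162 — 2 statements merged into one kernel-verified Lean document; each statement's English description precedes it below -/
import Mathlib

section
/- Let f₁, f₂, f₃, f₄ be bent functions on 𝔽₂^n (n even). The concatenation f = f₁‖f₂‖f₃‖f₄ ∈ 𝓑_{n+2} is bent if and only if f₁* + f₂* + f₃* + f₄* = 1 (the dual bent condition). -/
/-- Walsh–Hadamard transform on `𝔽₂^n`. -/
def Wv (n : ℕ) (f : (Fin n → ZMod 2) → ZMod 2) (a : Fin n → ZMod 2) : ℤ :=
  ∑ x : Fin n → ZMod 2, (-1 : ℤ) ^ ((f x + ∑ i, x i * a i).val)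

/-- Walsh–Hadamard transform on `𝔽₂^n × 𝔽₂ × 𝔽₂`. -/
def Wc (n : ℕ) (f : (Fin n → ZMod 2) × ZMod 2 × ZMod 2 → ZMod 2)
    (a : (Fin n → ZMod 2) × ZMod 2 × ZMod 2) : ℤ :=
  ∑ x : (Fin n → ZMod 2) × ZMod 2 × ZMod 2,
    (-1 : ℤ) ^ ((f x + (∑ i, x.1 i * a.1 i) + x.2.1 * a.2.1 + x.2.2 * a.2.2).val)

lemma sum_zmod2 {M} [AddCommMonoid M] (h : ZMod 2 → M) : ∑ b : ZMod 2, h b = h 0 + h 1 :=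
  Fin.sum_univ_two h

lemma sign4 (u₁ u₂ u₃ u₄ b₁ b₂ : ZMod 2) :
    (-1:ℤ)^((u₁ + 0*b₁ + 0*b₂).val) + (-1:ℤ)^((u₂ + 0*b₁ + 1*b₂).val)
      + (-1:ℤ)^((u₃ + 1*b₁ + 0*b₂).val) + (-1:ℤ)^((u₄ + 1*b₁ + 1*b₂).val)
    = (-1:ℤ)^(u₁.val) + (-1:ℤ)^(b₂.val)*(-1:ℤ)^(u₂.val)
      + (-1:ℤ)^(b₁.val)*(-1:ℤ)^(u₃.val)
      + (-1:ℤ)^(b₁.val)*(-1:ℤ)^(b₂.val)*(-1:ℤ)^(u₄.val) := by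
  revert u₁ u₂ u₃ u₄ b₁ b₂; decide

lemma Wc_eq (n : ℕ) (f₁ f₂ f₃ f₄ : (Fin n → ZMod 2) → ZMod 2)
    (f : (Fin n → ZMod 2) × ZMod 2 × ZMod 2 → ZMod 2)
    (hf : ∀ z : Fin n → ZMod 2,
      f (z, 0, 0) = f₁ z ∧ f (z, 0, 1) = f₂ z ∧ f (z, 1, 0) = f₃ z ∧ f (z, 1, 1) = f₄ z)
    (a : Fin n → ZMod 2) (b₁ b₂ : ZMod 2) :
    Wc n f (a, b₁, b₂) = Wv n f₁ a + (-1:ℤ)^(b₂.val) * Wv n f₂ a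
      + (-1:ℤ)^(b₁.val) * Wv n f₃ a + (-1:ℤ)^(b₁.val) * (-1:ℤ)^(b₂.val) * Wv n f₄ a := by
  unfold Wc Wv
  rw [Fintype.sum_prod_type]
  simp only [Fintype.sum_prod_type, sum_zmod2]
  rw [Finset.mul_sum, Finset.mul_sum, Finset.mul_sum, ← Finset.sum_add_distrib,
    ← Finset.sum_add_distrib, ← Finset.sum_add_distrib]
  refine Finset.sum_congr rfl fun z _ => ?_
  obtain ⟨h1, h2, h3, h4⟩ := hf z
  simp only [h1, h2, h3, h4]
  have := sign4 (f₁ z + ∑ i, z i * a i) (f₂ z + ∑ i, z i * a i)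
    (f₃ z + ∑ i, z i * a i) (f₄ z + ∑ i, z i * a i) b₁ b₂
  linarith

lemma sgn_mem (u : ZMod 2) : (-1:ℤ)^u.val = 1 ∨ (-1:ℤ)^u.val = -1 := by revert u; decide

lemma prod_sign (u₁ u₂ u₃ u₄ : ZMod 2) :
    u₁ + u₂ + u₃ + u₄ = 1 ↔
      (-1:ℤ)^u₁.val * (-1:ℤ)^u₂.val * (-1:ℤ)^u₃.val * (-1:ℤ)^u₄.val = -1 := by
  revert u₁ u₂ u₃ u₄; decide

lemma key1 (s₁ s₂ s₃ s₄ t₁ t₂ : ℤ)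
    (h₁ : s₁ = 1 ∨ s₁ = -1) (h₂ : s₂ = 1 ∨ s₂ = -1) (h₃ : s₃ = 1 ∨ s₃ = -1)
    (h₄ : s₄ = 1 ∨ s₄ = -1) (i₁ : t₁ = 1 ∨ t₁ = -1) (i₂ : t₂ = 1 ∨ t₂ = -1)
    (hp : s₁ * s₂ * s₃ * s₄ = -1) :
    s₁ + t₂*s₂ + t₁*s₃ + t₁*t₂*s₄ = 2 ∨ s₁ + t₂*s₂ + t₁*s₃ + t₁*t₂*s₄ = -2 := by
  rcases h₁ with rfl | rfl <;> rcases h₂ with rfl | rfl <;> rcases h₃ with rfl | rfl <;>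
    rcases h₄ with rfl | rfl <;> rcases i₁ with rfl | rfl <;> rcases i₂ with rfl | rfl <;>
    (revert hp; norm_num)

lemma key2 (s₁ s₂ s₃ s₄ : ℤ)
    (h₁ : s₁ = 1 ∨ s₁ = -1) (h₂ : s₂ = 1 ∨ s₂ = -1) (h₃ : s₃ = 1 ∨ s₃ = -1)
    (h₄ : s₄ = 1 ∨ s₄ = -1)
    (hs : s₁ + s₂ + s₃ + s₄ = 2 ∨ s₁ + s₂ + s₃ + s₄ = -2) :
    s₁ * s₂ * s₃ * s₄ = -1 := by
  rcases h₁ with rfl | rfl <;> rcases h₂ with rfl | rfl <;> rcases h₃ with rfl | rfl <;>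
    rcases h₄ with rfl | rfl <;> (revert hs; norm_num)

/-- the 4-concatenation of bent functions is bent iff the dual bent condition
`f₁* + f₂* + f₃* + f₄* = 1` holds. -/
theorem stmt_9 (n : ℕ) (hn : Even n) (f₁ f₂ f₃ f₄ g₁ g₂ g₃ g₄ : (Fin n → ZMod 2) → ZMod 2)
    (hg₁ : ∀ a, Wv n f₁ a = 2 ^ (n / 2) * (-1 : ℤ) ^ ((g₁ a).val))
    (hg₂ : ∀ a, Wv n f₂ a = 2 ^ (n / 2) * (-1 : ℤ) ^ ((g₂ a).val))
    (hg₃ : ∀ a, Wv n f₃ a = 2 ^ (n / 2) * (-1 : ℤ) ^ ((g₃ a).val))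
    (hg₄ : ∀ a, Wv n f₄ a = 2 ^ (n / 2) * (-1 : ℤ) ^ ((g₄ a).val))
    (f : (Fin n → ZMod 2) × ZMod 2 × ZMod 2 → ZMod 2)
    (hf : ∀ z : Fin n → ZMod 2,
      f (z, 0, 0) = f₁ z ∧ f (z, 0, 1) = f₂ z ∧ f (z, 1, 0) = f₃ z ∧ f (z, 1, 1) = f₄ z) :
    (∀ a, Wc n f a = 2 ^ (n / 2 + 1) ∨ Wc n f a = -(2 ^ (n / 2 + 1))) ↔
      (∀ a, g₁ a + g₂ a + g₃ a + g₄ a = 1) := by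
  have hP : (0:ℤ) < 2 ^ (n / 2) := by positivity
  constructor
  · intro h a
    have hb := h (a, 0, 0)
    rw [Wc_eq n f₁ f₂ f₃ f₄ f hf a 0 0, hg₁ a, hg₂ a, hg₃ a, hg₄ a, pow_succ] at hb
    simp only [ZMod.val_zero, pow_zero, one_mul] at hb
    have hsum : (-1:ℤ)^((g₁ a).val) + (-1:ℤ)^((g₂ a).val)
        + (-1:ℤ)^((g₃ a).val) + (-1:ℤ)^((g₄ a).val) = 2 ∨
        (-1:ℤ)^((g₁ a).val) + (-1:ℤ)^((g₂ a).val)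
        + (-1:ℤ)^((g₃ a).val) + (-1:ℤ)^((g₄ a).val) = -2 := by
      rcases hb with hb | hb
      · left
        refine mul_left_cancel₀ hP.ne' (show (2:ℤ)^(n/2) * ((-1:ℤ)^((g₁ a).val) + (-1:ℤ)^((g₂ a).val) + (-1:ℤ)^((g₃ a).val) + (-1:ℤ)^((g₄ a).val)) = (2:ℤ)^(n/2) * 2 from by linear_combination hb)
      · right
        refine mul_left_cancel₀ hP.ne' (show (2:ℤ)^(n/2) * ((-1:ℤ)^((g₁ a).val) + (-1:ℤ)^((g₂ a).val) + (-1:ℤ)^((g₃ a).val) + (-1:ℤ)^((g₄ a).val)) = (2:ℤ)^(n/2) * (-2) from by linear_combination hb)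
    exact (prod_sign _ _ _ _).2
      (key2 _ _ _ _ (sgn_mem _) (sgn_mem _) (sgn_mem _) (sgn_mem _) hsum)
  · intro h a
    obtain ⟨a, b₁, b₂⟩ := a
    have hp := (prod_sign _ _ _ _).1 (h a)
    have hS := key1 _ _ _ _ ((-1:ℤ)^b₁.val) ((-1:ℤ)^b₂.val)
      (sgn_mem (g₁ a)) (sgn_mem (g₂ a)) (sgn_mem (g₃ a)) (sgn_mem (g₄ a))
      (sgn_mem b₁) (sgn_mem b₂) hp
    rw [Wc_eq n f₁ f₂ f₃ f₄ f hf a b₁ b₂, hg₁ a, hg₂ a, hg₃ a, hg₄ a]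
    rcases hS with hS | hS
    · left; rw [pow_succ]; linear_combination (2:ℤ)^(n/2) * hS
    · right; rw [pow_succ]; linear_combination (2:ℤ)^(n/2) * hS
end

section
/- Let fᵢ(x,y) = Tr(x·αᵢ y^d) + hᵢ(y) on 𝔽_{2^m} × 𝔽_{2^m} with d = 2^j(2^i + 1) (weight-2 exponent) and α₁ ≠ α₂ ∈ 𝔽_{2^m}*. Then for any u = (u₁, u₂) with u₂ ≠ 0 and any v = (v₁, v₂), the function (x,y) ↦ D_u f₁(x,y) + D_u f₂(x + v₁, y + v₂) is not identically zero, where D_{(u₁,u₂)}g(x,y) = g(x,y) + g(x+u₁, y+u₂). -/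
/-- Absolute trace of `𝔽_{2^m}` to `𝔽₂`. -/
noncomputable def Tr (m : ℕ) (x : GaloisField 2 m) : ZMod 2 :=
  Algebra.trace (ZMod 2) (GaloisField 2 m) x

lemma Tr.add (m : ℕ) (a b : GaloisField 2 m) : Tr m (a + b) = Tr m a + Tr m b :=
  map_add (Algebra.trace (ZMod 2) (GaloisField 2 m)) a b

lemma Tr.zero (m : ℕ) : Tr m 0 = 0 :=
  map_zero (Algebra.trace (ZMod 2) (GaloisField 2 m))

lemma Tr.split (m : ℕ) (a b c : GaloisField 2 m) :
    Tr m ((a + b) * c) = Tr m (a * c) + Tr m (b * c) := by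
  rw [add_mul]; exact Tr.add m _ _

lemma Tr.nondeg (m : ℕ) {a : GaloisField 2 m} (ha : a ≠ 0) :
    ∃ b, Tr m (a * b) ≠ 0 := by
  have htr := (traceForm_nondegenerate (ZMod 2) (GaloisField 2 m)).1 a
  simp_rw [Algebra.traceForm_apply] at htr
  by_contra! hf
  exact ha (htr hf)

open Polynomial in
lemma exists_nonfix (m i : ℕ) (hm : 0 < m) (hi : i % m ≠ 0) :
    ∃ z : GaloisField 2 m, z ^ (2^i) ≠ z := by
  set K := GaloisField 2 m with hK
  haveI : Fintype K := Fintype.ofFinite K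
  have hcard : Fintype.card K = 2 ^ m := by
    rw [← Nat.card_eq_fintype_card]; exact GaloisField.card 2 m hm.ne'
  set r := i % m with hr
  have hrm : r < m := Nat.mod_lt _ hm
  have hred : ∀ z : GaloisField 2 m, z ^ (2^i) = z ^ (2^r) := by
    intro z
    conv_lhs => rw [← Nat.div_add_mod i m]
    rw [pow_add, pow_mul, pow_mul, ← hcard, FiniteField.pow_card_pow]
  classical
  by_contra! h
  have hroots : ∀ z : GaloisField 2 m, z ∈ ((X ^ 2 ^ r - X : K[X]).roots) := by
    intro z
    rw [mem_roots (FiniteField.X_pow_card_pow_sub_X_ne_zero K hi (by norm_num))]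
    simp [sub_eq_zero, ← hred, h z]
  have hle : Fintype.card K ≤ 2 ^ r := by
    calc Fintype.card K = (Finset.univ : Finset K).card := rfl
      _ ≤ ((X ^ 2 ^ r - X : K[X]).roots).toFinset.card :=
          Finset.card_le_card (fun z _ => Multiset.mem_toFinset.2 (hroots z))
      _ ≤ Multiset.card ((X ^ 2 ^ r - X : K[X]).roots) := Multiset.toFinset_card_le _
      _ ≤ _ := by
          have := Polynomial.card_roots' (X ^ 2 ^ r - X : K[X])
          rwa [FiniteField.X_pow_card_pow_sub_X_natDegree_eq K hi (by norm_num)] at this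
  rw [hcard] at hle
  exact absurd hle (Nat.not_le.2 (Nat.pow_lt_pow_right one_lt_two hrm))

lemma char2_add_eq_zero {m : ℕ} {a b : GaloisField 2 m} (h : a + b = 0) : a = b := by
  rw [← CharTwo.sub_eq_add] at h; exact sub_eq_zero.mp h

/-- The derivative identity for a weight-two exponent. -/
lemma phi_eq (m i j d : ℕ) (hd : d = 2 ^ j * (2 ^ i + 1)) (w c : GaloisField 2 m) :
    w ^ d + (w + c) ^ d
      = c ^ (2^j) * w ^ (2^(i+j)) + c ^ (2^(i+j)) * w ^ (2^j) + c ^ d := by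
  have htwo : (2 : GaloisField 2 m) = 0 := CharTwo.two_eq_zero
  subst hd
  have e : ∀ a : GaloisField 2 m, a ^ (2 ^ j * (2 ^ i + 1)) = (a ^ (2^i) * a) ^ (2^j) := by
    intro a
    rw [mul_comm (2^j), pow_mul, pow_succ]
  rw [e w, e (w + c), e c]
  have hsum : ((w + c) ^ (2^i) * (w + c))
      = (w ^ (2^i) * w) + ((w ^ (2^i) * c) + ((c ^ (2^i) * w) + (c ^ (2^i) * c))) := by
    rw [add_pow_char_pow]; ring
  rw [hsum, add_pow_char_pow, add_pow_char_pow, add_pow_char_pow,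
    mul_pow, mul_pow, mul_pow, mul_pow]
  have hij : ∀ a : GaloisField 2 m, (a ^ (2^i)) ^ (2^j) = a ^ (2^(i+j)) := by
    intro a; rw [← pow_mul, ← pow_add]
  rw [hij w, hij c]
  linear_combination (w ^ (2^(i+j)) * w ^ (2^j)) * htwo

/-- for Maiorana–McFarland functions built from the monomials `αₖ y^d` with
a weight-two exponent `d = 2^j (2^i + 1)` and `α₁ ≠ α₂`, the shifted sum of derivatives
`D_u f₁(x,y) + D_u f₂(x+v₁, y+v₂)` is never identically zero when `u₂ ≠ 0`. -/
theorem stmt_19 (m i j : ℕ) (hm : 0 < m) (hi : i % m ≠ 0)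
    (d : ℕ) (hd : d = 2 ^ j * (2 ^ i + 1))
    (α₁ α₂ : GaloisField 2 m) (hα₁ : α₁ ≠ 0) (hα₂ : α₂ ≠ 0) (hne : α₁ ≠ α₂)
    (h₁ h₂ : GaloisField 2 m → ZMod 2)
    (f₁ f₂ : GaloisField 2 m × GaloisField 2 m → ZMod 2)
    (hf₁ : ∀ x y, f₁ (x, y) = Tr m (x * (α₁ * y ^ d)) + h₁ y)
    (hf₂ : ∀ x y, f₂ (x, y) = Tr m (x * (α₂ * y ^ d)) + h₂ y) :
    ∀ (u₁ u₂ v₁ v₂ : GaloisField 2 m), u₂ ≠ 0 →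
      ∃ x y : GaloisField 2 m,
        (f₁ (x, y) + f₁ (x + u₁, y + u₂))
          + (f₂ (x + v₁, y + v₂) + f₂ (x + v₁ + u₁, y + v₂ + u₂)) ≠ 0 := by
  intro u₁ u₂ v₁ v₂ hu₂
  by_contra! H
  have htwo : (2 : GaloisField 2 m) = 0 := CharTwo.two_eq_zero
  -- Step 1: extract the bilinear part
  have key : ∀ x y : GaloisField 2 m,
      Tr m (x * (α₁ * y ^ d) + (x * (α₁ * (y + u₂) ^ d)
        + (x * (α₂ * (y + v₂) ^ d) + x * (α₂ * (y + v₂ + u₂) ^ d)))) = 0 := by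
    intro x y
    have h1 := H x y
    have h0 := H 0 y
    rw [hf₁, hf₁, hf₂, hf₂] at h1 h0
    simp only [Tr.split, zero_add, zero_mul, Tr.zero] at h1 h0
    simp only [Tr.add]
    linear_combination h1 - h0
  -- Step 2: nondegeneracy of the trace form
  have hA : ∀ y : GaloisField 2 m,
      α₁ * y ^ d + (α₁ * (y + u₂) ^ d + (α₂ * (y + v₂) ^ d + α₂ * (y + v₂ + u₂) ^ d)) = 0 := by
    intro y
    by_contra hA0
    obtain ⟨b, hb⟩ := Tr.nondeg m hA0
    apply hb
    have := key b y
    rw [mul_comm]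
    convert this using 2
    ring
  -- Step 3: the affine structure of the derivative
  have hB : ∀ y : GaloisField 2 m,
      α₁ * (u₂ ^ (2^j) * y ^ (2^(i+j)) + u₂ ^ (2^(i+j)) * y ^ (2^j) + u₂ ^ d)
        + α₂ * (u₂ ^ (2^j) * (y + v₂) ^ (2^(i+j)) + u₂ ^ (2^(i+j)) * (y + v₂) ^ (2^j) + u₂ ^ d)
        = 0 := by
    intro y
    rw [← phi_eq m i j d hd y u₂, ← phi_eq m i j d hd (y + v₂) u₂]
    linear_combination hA y
  -- Step 4: subtract the value at 0 to isolate the linear part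
  have hpow0 : ∀ n : ℕ, (0 : GaloisField 2 m) ^ (2^n) = 0 := fun n => zero_pow (by positivity)
  have hB0 := hB 0
  rw [hpow0, hpow0] at hB0
  have hlin : ∀ y : GaloisField 2 m,
      (α₁ + α₂) * (u₂ ^ (2^j) * y ^ (2^(i+j)) + u₂ ^ (2^(i+j)) * y ^ (2^j)) = 0 := by
    intro y
    have hfr1 : (y + v₂) ^ (2^(i+j)) = y ^ (2^(i+j)) + v₂ ^ (2^(i+j)) := add_pow_char_pow _ _ _ _
    have hfr2 : (y + v₂) ^ (2^j) = y ^ (2^j) + v₂ ^ (2^j) := add_pow_char_pow _ _ _ _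
    simp only [zero_add] at hB0
    linear_combination hB y - hB0 - α₂ * u₂ ^ (2^j) * hfr1 - α₂ * u₂ ^ (2^(i+j)) * hfr2
  -- Step 5: α₁ + α₂ ≠ 0, hence the linear map vanishes
  have hαne : α₁ + α₂ ≠ 0 := by
    intro h
    exact hne (char2_add_eq_zero h)
  have hLzero : ∀ y : GaloisField 2 m, u₂ ^ (2^j) * y ^ (2^(i+j)) + u₂ ^ (2^(i+j)) * y ^ (2^j) = 0 := by
    intro y
    rcases mul_eq_zero.mp (hlin y) with h | h
    · exact absurd h hαne
    · exact h
  -- Step 6: contradiction with a non-fixed point of Frobenius^i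
  obtain ⟨z, hz⟩ := exists_nonfix m i hm hi
  apply hz
  have h := hLzero (u₂ * z)
  rw [mul_pow, mul_pow] at h
  have hfac : u₂ ^ (2^j) * u₂ ^ (2^(i+j)) * (z ^ (2^(i+j)) + z ^ (2^j)) = 0 := by
    linear_combination h
  have hu2pow : u₂ ^ (2^j) * u₂ ^ (2^(i+j)) ≠ 0 :=
    mul_ne_zero (pow_ne_zero _ hu₂) (pow_ne_zero _ hu₂)
  have hzz : z ^ (2^(i+j)) + z ^ (2^j) = 0 := by
    rcases mul_eq_zero.mp hfac with h' | h'
    · exact absurd h' hu2pow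
    · exact h'
  have hzz' : z ^ (2^(i+j)) = z ^ (2^j) := char2_add_eq_zero hzz
  have hfrj : iterateFrobenius (GaloisField 2 m) 2 j (z ^ (2^i)) = iterateFrobenius (GaloisField 2 m) 2 j z := by
    rw [iterateFrobenius_def, iterateFrobenius_def, ← pow_mul, ← pow_add]
    exact hzz'
  exact iterateFrobenius_inj (GaloisField 2 m) 2 j hfrj
end
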